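/- Let d ≥ 2, let K : ℝ^d → ℂ be measurable, and suppose there is a constant C ≥ 0 such that for every ζ ∈ ℝ^d with |ζ| = 1, the restriction of K to the unit sphere centered at ζ is integrable with ∫_{S^{d-1}} |K(ζ + ω)| dS(ω) ≤ C. Then for every φ ∈ L²(S^{d-1}), the function (Tφ)(η) = (π/(2π)^{d/2}) ∫_{S^{d-1}} K(η − ξ) φ(ξ) dS(ξ) is defined for almost every η ∈ S^{d-1}, belongs to L²(S^{d-1}), and ‖Tφ‖_{L²(S^{d-1})} ≤ (π/(2π)^{d/2}) C ‖φ‖_{L²(S^{d-1})}. (Applied to K = â, this shows the Toeplitz operator with symbol a is bounded on the Herglotz space with norm at most (π/(2π)^{d/2}) C.) -/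

import Mathlib

open MeasureTheory Filter Metric ComplexConjugate

noncomputable section

/-- Euclidean space ℝ^d. -/
abbrev Ed (d : ℕ) : Type := EuclideanSpace ℝ (Fin d)

/-- The surface measure on the unit sphere S^{d-1} ⊂ ℝ^d, realized as the
(d-1)-dimensional Hausdorff measure restricted to the sphere. -/
def surf (d : ℕ) : Measure (Ed d) := (μH[(d : ℝ) - 1]).restrict (sphere (0 : Ed d) 1)

/-- The constant c_d = √π / (2π)^{d/2}. -/
def cd (d : ℕ) : ℝ := Real.sqrt Real.pi / (2 * Real.pi) ^ ((d : ℝ) / 2)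

/-- The Herglotz wave function Iφ(x) = c_d ∫_{S^{d-1}} φ(ξ) e^{i x·ξ} dS(ξ). -/
def herg (d : ℕ) (φ : Ed d → ℂ) (x : Ed d) : ℂ :=
  (cd d : ℂ) * ∫ ξ, φ ξ * Complex.exp (Complex.I * ((inner ℝ x ξ : ℝ) : ℂ)) ∂(surf d)

open Function Module
open scoped ENNReal NNReal

/-!
The argument is Schur's test. For `η` on the sphere, Cauchy–Schwarz against the weight
`|K(η - ·)|` gives `|∫ K(η - ξ) φ(ξ) dS(ξ)|² ≤ C ∫ |K(η - ξ)| |φ(ξ)|² dS(ξ)`; integrating in `η`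
and exchanging the integrals, the column bound `∫ |K(η - ξ)| dS(η) ≤ C` yields the `L²` bound `C`.
Both bounds are the hypothesis on `K`, the row bound after the change of variables `ξ ↦ -ξ`.
Tonelli needs the surface measure to be finite, hence s-finite: the sphere is covered by finitely
many caps `⟪u, x⟫ > 1/2`, each the image of a ball of the hyperplane `u^⊥` under the 2-Lipschitz
gnomonic projection `w ↦ (u + w) / ‖u + w‖`.
-/

section Sphere

variable {E : Type*} [NormedAddCommGroup E]

theorem lipschitzOnWith_inv_norm_smul [NormedSpace ℝ E] :
    LipschitzOnWith 2 (fun x : E => ‖x‖⁻¹ • x) {x | 1 ≤ ‖x‖} := by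
  rw [lipschitzOnWith_iff_norm_sub_le]
  intro a (ha : 1 ≤ ‖a‖) b (hb : 1 ≤ ‖b‖)
  have ha0 : 0 < ‖a‖ := one_pos.trans_le ha
  have hb0 : 0 < ‖b‖ := one_pos.trans_le hb
  have hsplit : ‖a‖⁻¹ • a - ‖b‖⁻¹ • b = ‖a‖⁻¹ • (a - b) + (‖a‖⁻¹ - ‖b‖⁻¹) • b := by
    rw [smul_sub, sub_smul]; abel
  have h₁ : ‖‖a‖⁻¹ • (a - b)‖ ≤ ‖a - b‖ := by
    rw [norm_smul, norm_inv, norm_norm]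
    exact mul_le_of_le_one_left (norm_nonneg _) (inv_le_one_of_one_le₀ ha)
  have h₂ : ‖(‖a‖⁻¹ - ‖b‖⁻¹) • b‖ ≤ ‖a - b‖ := by
    have : ‖a‖⁻¹ - ‖b‖⁻¹ = (‖b‖ - ‖a‖) / (‖a‖ * ‖b‖) := by field_simp
    rw [norm_smul, Real.norm_eq_abs, this, abs_div, abs_of_pos (mul_pos ha0 hb0),
      div_mul_eq_mul_div, mul_div_mul_right _ _ hb0.ne']
    exact (div_le_self (abs_nonneg _) ha).trans
      ((abs_norm_sub_norm_le b a).trans_eq (norm_sub_rev b a))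
  calc ‖‖a‖⁻¹ • a - ‖b‖⁻¹ • b‖ ≤ ‖a - b‖ + ‖a - b‖ :=
        hsplit ▸ (norm_add_le _ _).trans (add_le_add h₁ h₂)
    _ = (2 : ℝ≥0) * ‖a - b‖ := by push_cast; ring

variable [InnerProductSpace ℝ E]

def gnomonicProjection (u : E) (w : (ℝ ∙ u)ᗮ) : E := ‖u + w‖⁻¹ • (u + w)

theorem lipschitzWith_gnomonicProjection {u : E} (hu : ‖u‖ = 1) :
    LipschitzWith 2 (gnomonicProjection u) := by
  have hshift : Isometry (fun w : (ℝ ∙ u)ᗮ => u + (w : E)) :=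
    (isometry_add_left u).comp isometry_subtype_coe
  have hmaps : Set.MapsTo (fun w : (ℝ ∙ u)ᗮ => u + (w : E)) Set.univ {x | 1 ≤ ‖x‖} := by
    intro w _
    have hpyth := norm_add_sq_eq_norm_sq_add_norm_sq_real
      (Submodule.mem_orthogonal_singleton_iff_inner_right.1 w.2)
    rw [hu] at hpyth
    show 1 ≤ ‖u + w‖
    nlinarith [norm_nonneg (u + w), sq_nonneg ‖(w : E)‖]
  have := lipschitzOnWith_univ.1
    (lipschitzOnWith_inv_norm_smul.comp hshift.lipschitz.lipschitzOnWith hmaps)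
  rwa [mul_one] at this

theorem exists_mem_closedBall_gnomonicProjection_eq {u x : E} (hu : ‖u‖ = 1) (hx : ‖x‖ = 1)
    (hux : 1 / 2 < inner ℝ u x) :
    ∃ w ∈ closedBall (0 : (ℝ ∙ u)ᗮ) 3, gnomonicProjection u w = x := by
  set t := inner ℝ u x
  have ht : 0 < t := by linarith
  have hw : t⁻¹ • (x - t • u) ∈ (ℝ ∙ u)ᗮ := by
    rw [Submodule.mem_orthogonal_singleton_iff_inner_right, inner_smul_right, inner_sub_right,
      inner_smul_right, real_inner_self_eq_norm_sq, hu, one_pow, mul_one, sub_self, mul_zero]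
  have hsum : u + t⁻¹ • (x - t • u) = t⁻¹ • x := by
    rw [smul_sub, smul_smul, inv_mul_cancel₀ ht.ne', one_smul]; abel
  refine ⟨⟨_, hw⟩, ?_, ?_⟩
  · rw [mem_closedBall_zero_iff, Submodule.coe_norm]
    have ht_inv : t⁻¹ < 2 := by rw [inv_lt_comm₀ ht two_pos]; linarith
    calc ‖t⁻¹ • (x - t • u)‖ ≤ t⁻¹ * (‖x‖ + t * ‖u‖) := by
          rw [norm_smul, Real.norm_of_nonneg (inv_nonneg.mpr ht.le)]
          gcongr
          exact (norm_sub_le _ _).trans_eq (by rw [norm_smul, Real.norm_of_nonneg ht.le])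
      _ = t⁻¹ + 1 := by rw [hx, hu, mul_one, mul_add, mul_one, inv_mul_cancel₀ ht.ne']
      _ ≤ 3 := by linarith
  · rw [gnomonicProjection, Submodule.coe_mk, hsum, norm_smul, hx, mul_one, norm_inv,
      Real.norm_of_nonneg ht.le, inv_inv, smul_smul, mul_inv_cancel₀ ht.ne', one_smul]

variable [MeasurableSpace E] [BorelSpace E] [FiniteDimensional ℝ E]

theorem hausdorffMeasure_gnomonicProjection_image_closedBall_lt_top {u : E} (hu : ‖u‖ = 1)
    (r : ℝ) : μH[(finrank ℝ E : ℝ) - 1] (gnomonicProjection u '' closedBall 0 r) < ∞ := by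
  have hdim : (finrank ℝ E : ℝ) - 1 = finrank ℝ (ℝ ∙ u)ᗮ := by
    rw [← (ℝ ∙ u).finrank_add_finrank_orthogonal,
      finrank_span_singleton (norm_ne_zero_iff.mp (by simp [hu]))]
    push_cast; ring
  rw [hdim]
  refine ((lipschitzWith_gnomonicProjection hu).hausdorffMeasure_image_le
    (Nat.cast_nonneg _) _).trans_lt ?_
  exact ENNReal.mul_lt_top (by simp) (isCompact_closedBall _ _).measure_lt_top

theorem hausdorffMeasure_sphere_lt_top :
    μH[(finrank ℝ E : ℝ) - 1] (sphere (0 : E) 1) < ∞ := by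
  obtain ⟨t, ht⟩ := (isCompact_sphere (0 : E) 1).elim_finite_subcover
    (fun u : sphere (0 : E) 1 => {x | 1 / 2 < inner ℝ (u : E) x})
    (fun u => isOpen_lt continuous_const (continuous_const.inner continuous_id))
    (fun x hx => Set.mem_iUnion.2 ⟨⟨x, hx⟩, by simp [mem_sphere_zero_iff_norm.1 hx]; norm_num⟩)
  have hcover : sphere (0 : E) 1 ⊆ ⋃ u ∈ t, gnomonicProjection (u : E) '' closedBall 0 3 := by
    intro x hx
    obtain ⟨u, hut, hux⟩ := Set.mem_iUnion₂.1 (ht hx)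
    obtain ⟨w, hw, rfl⟩ := exists_mem_closedBall_gnomonicProjection_eq
      (mem_sphere_zero_iff_norm.1 u.2) (mem_sphere_zero_iff_norm.1 hx) hux
    exact Set.mem_biUnion hut ⟨w, hw, rfl⟩
  refine (measure_mono hcover).trans_lt ((measure_biUnion_finset_le _ _).trans_lt ?_)
  exact ENNReal.sum_lt_top.2 fun u _ =>
    hausdorffMeasure_gnomonicProjection_image_closedBall_lt_top (mem_sphere_zero_iff_norm.1 u.2) 3

end Sphere

theorem sq_eLpNorm_two {α F : Type*} [MeasurableSpace α] [NormedAddCommGroup F] {μ : Measure α}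
    (f : α → F) : eLpNorm f 2 μ ^ 2 = ∫⁻ x, ‖f x‖ₑ ^ 2 ∂μ := by
  simpa only [ENNReal.coe_ofNat, NNReal.coe_ofNat, ENNReal.rpow_two] using
    eLpNorm_nnreal_pow_eq_lintegral (f := f) (μ := μ) (p := 2) two_ne_zero

theorem ENNReal.sq_lintegral_mul_le {β : Type*} [MeasurableSpace β] {ν : Measure β}
    {k g : β → ℝ≥0∞} (hk : AEMeasurable k ν) (hg : AEMeasurable g ν) :
    (∫⁻ y, k y * g y ∂ν) ^ 2 ≤ (∫⁻ y, k y ∂ν) * ∫⁻ y, k y * g y ^ 2 ∂ν := by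
  have hsqrt : ∀ a : ℝ≥0∞, a ^ (1 / 2 : ℝ) * a ^ (1 / 2 : ℝ) = a := fun a => by
    rw [← ENNReal.rpow_add_of_nonneg _ _ (by norm_num) (by norm_num)]; norm_num
  have hsplit : ∀ y, k y * g y = k y ^ (1 / 2 : ℝ) * (k y * g y ^ 2) ^ (1 / 2 : ℝ) := fun y => by
    rw [ENNReal.mul_rpow_of_nonneg _ _ (by norm_num), ← mul_assoc, hsqrt, ← ENNReal.rpow_natCast,
      ← ENNReal.rpow_mul]
    norm_num
  have hHolder := ENNReal.lintegral_mul_norm_pow_le hk (hk.mul (hg.pow_const 2))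
    (p := 1 / 2) (q := 1 / 2) (by norm_num) (by norm_num) (by norm_num)
  calc (∫⁻ y, k y * g y ∂ν) ^ 2
      ≤ ((∫⁻ y, k y ∂ν) ^ (1 / 2 : ℝ) * (∫⁻ y, k y * g y ^ 2 ∂ν) ^ (1 / 2 : ℝ)) ^ 2 := by
        rw [lintegral_congr hsplit]
        gcongr
        exact hHolder
    _ = (∫⁻ y, k y ∂ν) * ∫⁻ y, k y * g y ^ 2 ∂ν := by
        rw [mul_pow, sq, sq, hsqrt, hsqrt]

theorem integral_mul_congr_ae {α β 𝕜 : Type*} [MeasurableSpace β] [RCLike 𝕜] {ν : Measure β}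
    {k : α → β → 𝕜} {f g : β → 𝕜} (hfg : f =ᵐ[ν] g) :
    (fun x => ∫ y, k x y * f y ∂ν) = fun x => ∫ y, k x y * g y ∂ν :=
  funext fun _ => integral_congr_ae (hfg.mono fun y hy => by simp only [hy])

section SchurTest

variable {α β : Type*} [MeasurableSpace α] [MeasurableSpace β] {μ : Measure α} {ν : Measure β}

theorem lintegral_sq_lintegral_mul_le [SFinite μ] [SFinite ν] {k : α → β → ℝ≥0∞}
    (hk : Measurable (uncurry k)) {g : β → ℝ≥0∞} (hg : Measurable g) {C : ℝ≥0∞}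
    (hrow : ∀ᵐ x ∂μ, ∫⁻ y, k x y ∂ν ≤ C) (hcol : ∀ᵐ y ∂ν, ∫⁻ x, k x y ∂μ ≤ C) :
    ∫⁻ x, (∫⁻ y, k x y * g y ∂ν) ^ 2 ∂μ ≤ C ^ 2 * ∫⁻ y, g y ^ 2 ∂ν := by
  have hk_mul : Measurable (uncurry fun x y => k x y * g y ^ 2) :=
    hk.mul ((hg.pow_const 2).comp measurable_snd)
  calc ∫⁻ x, (∫⁻ y, k x y * g y ∂ν) ^ 2 ∂μ
      ≤ ∫⁻ x, C * ∫⁻ y, k x y * g y ^ 2 ∂ν ∂μ := by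
        refine lintegral_mono_ae (hrow.mono fun x hx => ?_)
        refine (ENNReal.sq_lintegral_mul_le hk.of_uncurry_left.aemeasurable
          hg.aemeasurable).trans ?_
        gcongr
    _ = C * ∫⁻ y, (∫⁻ x, k x y ∂μ) * g y ^ 2 ∂ν := by
        rw [lintegral_const_mul _ hk_mul.lintegral_prod_right,
          lintegral_lintegral_swap hk_mul.aemeasurable]
        congr 1
        exact lintegral_congr fun y => lintegral_mul_const _ hk.of_uncurry_right
    _ ≤ C * ∫⁻ y, C * g y ^ 2 ∂ν := by
        gcongr C * ?_
        exact lintegral_mono_ae (hcol.mono fun y hy => by gcongr)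
    _ = C ^ 2 * ∫⁻ y, g y ^ 2 ∂ν := by
        rw [lintegral_const_mul _ (hg.pow_const 2), ← mul_assoc, sq]

variable {𝕜 : Type*} [RCLike 𝕜] {k : α → β → 𝕜}

theorem aestronglyMeasurable_integral_mul [SFinite ν] (hk : Measurable (uncurry k))
    {f : β → 𝕜} (hf : AEStronglyMeasurable f ν) :
    AEStronglyMeasurable (fun x => ∫ y, k x y * f y ∂ν) μ := by
  rw [integral_mul_congr_ae hf.ae_eq_mk]
  have hF : StronglyMeasurable fun p : α × β => k p.1 p.2 * hf.mk f p.2 :=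
    (hk.mul (hf.measurable_mk.comp measurable_snd)).stronglyMeasurable
  exact hF.integral_prod_right'.aestronglyMeasurable

theorem eLpNorm_integral_mul_le [SFinite μ] [SFinite ν] (hk : Measurable (uncurry k))
    {f : β → 𝕜} (hf : AEStronglyMeasurable f ν) {C : ℝ≥0∞}
    (hrow : ∀ᵐ x ∂μ, ∫⁻ y, ‖k x y‖ₑ ∂ν ≤ C) (hcol : ∀ᵐ y ∂ν, ∫⁻ x, ‖k x y‖ₑ ∂μ ≤ C) :
    eLpNorm (fun x => ∫ y, k x y * f y ∂ν) 2 μ ≤ C * eLpNorm f 2 ν := by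
  rw [integral_mul_congr_ae hf.ae_eq_mk, eLpNorm_congr_ae hf.ae_eq_mk,
    ← ENNReal.pow_le_pow_left_iff two_ne_zero, mul_pow, sq_eLpNorm_two, sq_eLpNorm_two]
  calc ∫⁻ x, ‖∫ y, k x y * hf.mk f y ∂ν‖ₑ ^ 2 ∂μ
      ≤ ∫⁻ x, (∫⁻ y, ‖k x y‖ₑ * ‖hf.mk f y‖ₑ ∂ν) ^ 2 ∂μ := by
        gcongr with x
        simpa only [enorm_mul] using
          enorm_integral_le_lintegral_enorm (μ := ν) fun y => k x y * hf.mk f y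
    _ ≤ C ^ 2 * ∫⁻ y, ‖hf.mk f y‖ₑ ^ 2 ∂ν :=
        lintegral_sq_lintegral_mul_le hk.enorm hf.measurable_mk.enorm hrow hcol

theorem memLp_two_integral_mul [SFinite μ] [SFinite ν] (hk : Measurable (uncurry k))
    {f : β → 𝕜} (hf : MemLp f 2 ν) {C : ℝ≥0∞} (hC : C ≠ ∞)
    (hrow : ∀ᵐ x ∂μ, ∫⁻ y, ‖k x y‖ₑ ∂ν ≤ C) (hcol : ∀ᵐ y ∂ν, ∫⁻ x, ‖k x y‖ₑ ∂μ ≤ C) :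
    MemLp (fun x => ∫ y, k x y * f y ∂ν) 2 μ :=
  ⟨aestronglyMeasurable_integral_mul hk hf.1,
    (eLpNorm_integral_mul_le hk hf.1 hrow hcol).trans_lt (ENNReal.mul_lt_top hC.lt_top hf.2)⟩

end SchurTest

theorem isNegInvariant_hausdorffMeasure_restrict_sphere {E : Type*} [NormedAddCommGroup E]
    [MeasurableSpace E] [BorelSpace E] (s r : ℝ) :
    (μH[s].restrict (sphere (0 : E) r)).IsNegInvariant := by
  refine ⟨Measure.ext fun A hA => ?_⟩
  have hsphere : -sphere (0 : E) r = sphere 0 r := by ext; simp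
  rw [Measure.neg_apply, Measure.restrict_apply hA.neg, Measure.restrict_apply hA]
  nth_rewrite 1 [← hsphere]
  rw [← Set.inter_neg]
  exact (IsometryEquiv.neg E).hausdorffMeasure_preimage s _

instance isFiniteMeasure_surf (d : ℕ) : IsFiniteMeasure (surf d) :=
  ⟨by simpa [surf, finrank_euclideanSpace_fin] using hausdorffMeasure_sphere_lt_top (E := Ed d)⟩

instance isNegInvariant_surf (d : ℕ) : (surf d).IsNegInvariant :=
  isNegInvariant_hausdorffMeasure_restrict_sphere _ _

theorem ae_lintegral_surf_sub_le {d : ℕ} {g : Ed d → ℝ≥0∞} {B : ℝ≥0∞}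
    (hg : ∀ ζ : Ed d, ‖ζ‖ = 1 → ∫⁻ ω, g (ζ + ω) ∂surf d ≤ B) :
    (∀ᵐ η ∂surf d, ∫⁻ ξ, g (η - ξ) ∂surf d ≤ B) ∧ (∀ᵐ ξ ∂surf d, ∫⁻ η, g (η - ξ) ∂surf d ≤ B) := by
  have hunit : ∀ᵐ η ∂surf d, ‖η‖ = 1 :=
    (ae_restrict_mem isClosed_sphere.measurableSet).mono fun η hη => mem_sphere_zero_iff_norm.1 hη
  refine ⟨hunit.mono fun η hη => ?_, hunit.mono fun ξ hξ => ?_⟩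
  · rw [← lintegral_neg_eq_self]
    simpa only [sub_neg_eq_add] using hg η hη
  · simpa only [neg_add_eq_sub] using hg (-ξ) (by rwa [norm_neg])

theorem statement9_general (d : ℕ) (K : Ed d → ℂ) (hK : Measurable K)
    (C : ℝ)
    (hker : ∀ ζ : Ed d, ‖ζ‖ = 1 →
      Integrable (fun ω : Ed d => K (ζ + ω)) (surf d) ∧
      ∫ ω, ‖K (ζ + ω)‖ ∂(surf d) ≤ C)
    (φ : Ed d → ℂ) (hφ : MemLp φ 2 (surf d)) :
    MemLp (fun η => ((Real.pi / (2 * Real.pi) ^ ((d : ℝ) / 2) : ℝ) : ℂ) *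
        ∫ ξ, K (η - ξ) * φ ξ ∂(surf d)) 2 (surf d) ∧
    eLpNorm (fun η => ((Real.pi / (2 * Real.pi) ^ ((d : ℝ) / 2) : ℝ) : ℂ) *
        ∫ ξ, K (η - ξ) * φ ξ ∂(surf d)) 2 (surf d) ≤
      ENNReal.ofReal (Real.pi / (2 * Real.pi) ^ ((d : ℝ) / 2) * C) *
        eLpNorm φ 2 (surf d) := by
  obtain ⟨hrow, hcol⟩ := ae_lintegral_surf_sub_le (g := fun x => ‖K x‖ₑ) fun ζ hζ =>
    (ofReal_integral_norm_eq_lintegral_enorm (hker ζ hζ).1).symm.trans_le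
      (ENNReal.ofReal_le_ofReal (hker ζ hζ).2)
  have hk : Measurable (uncurry fun η ξ : Ed d => K (η - ξ)) := hK.comp measurable_sub
  refine ⟨(memLp_two_integral_mul hk hφ ENNReal.ofReal_ne_top hrow hcol).const_mul _, ?_⟩
  set c : ℝ := Real.pi / (2 * Real.pi) ^ ((d : ℝ) / 2)
  have hc : 0 ≤ c := by positivity
  calc eLpNorm (fun η => (c : ℂ) * ∫ ξ, K (η - ξ) * φ ξ ∂surf d) 2 (surf d)
      = ‖(c : ℂ)‖ₑ * eLpNorm (fun η => ∫ ξ, K (η - ξ) * φ ξ ∂surf d) 2 (surf d) :=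
        eLpNorm_const_smul (c : ℂ) _ _ _
    _ ≤ ENNReal.ofReal c * (ENNReal.ofReal C * eLpNorm φ 2 (surf d)) := by
        rw [← ofReal_norm, Complex.norm_real, Real.norm_of_nonneg hc]
        gcongr
        exact eLpNorm_integral_mul_le hk hφ.1 hrow hcol
    _ = ENNReal.ofReal (c * C) * eLpNorm φ 2 (surf d) := by
        rw [ENNReal.ofReal_mul hc, mul_assoc]

/-- a Young-type inequality on the sphere. If the restrictions of K
to all unit spheres centered at points of S^{d-1} have L¹ norms uniformly bounded
by C, then the integral operator with kernel (π/(2π)^{d/2}) K(η-ξ) is bounded on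
L²(S^{d-1}) with norm at most (π/(2π)^{d/2}) C. -/
theorem statement9 (d : ℕ) (hd : 2 ≤ d) (K : Ed d → ℂ) (hK : Measurable K)
    (C : ℝ) (hC : 0 ≤ C)
    (hker : ∀ ζ : Ed d, ‖ζ‖ = 1 →
      Integrable (fun ω : Ed d => K (ζ + ω)) (surf d) ∧
      ∫ ω, ‖K (ζ + ω)‖ ∂(surf d) ≤ C)
    (φ : Ed d → ℂ) (hφ : MemLp φ 2 (surf d)) :
    MemLp (fun η => ((Real.pi / (2 * Real.pi) ^ ((d : ℝ) / 2) : ℝ) : ℂ) *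
        ∫ ξ, K (η - ξ) * φ ξ ∂(surf d)) 2 (surf d) ∧
    eLpNorm (fun η => ((Real.pi / (2 * Real.pi) ^ ((d : ℝ) / 2) : ℝ) : ℂ) *
        ∫ ξ, K (η - ξ) * φ ξ ∂(surf d)) 2 (surf d) ≤
      ENNReal.ofReal (Real.pi / (2 * Real.pi) ^ ((d : ℝ) / 2) * C) *
        eLpNorm φ 2 (surf d) :=
  statement9_general d K hK C hker φ hφ
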